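/- arXiv:1204.1939 — 3 statements merged into one kernel-verified Lean document; each statement's English description precedes it below -/
import Mathlib

section
/- Let G be a finite graph of maximum degree Δ, let v be a vertex of G, and let s ≥ 1. Then the number of connected edge-induced subgraphs of G that contain v and have exactly s vertices is at most 2^{sΔ}. (An edge-induced subgraph is the subgraph determined by a nonempty set E′ of edges of G, whose vertex set is the set of endpoints of edges of E′.) -/
open scoped Classical

-- The vertex set of the edge-induced subgraph determined by a set `E'` of edges:
-- all endpoints of edges of `E'`.
def edgeVerts {V : Type*} (E' : Finset (Sym2 V)) : Set V := {x : V | ∃ e ∈ E', x ∈ e}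

-- `E'` determines a connected edge-induced subgraph: the graph with edge set `E'`,
-- restricted to the endpoints of edges of `E'`, is connected.
def EdgeInducedConnected {V : Type*} (E' : Finset (Sym2 V)) : Prop :=
  ((SimpleGraph.fromEdgeSet (E' : Set (Sym2 V))).induce (edgeVerts E')).Connected

/-!
Explore a connected edge set `E'` from `v`, adding at each step a vertex joined by an edge of `E'`
to the explored set, chosen as a function of the set of such vertices. Label the at most `Δ` edges
of `G` at each vertex injectively by `0, …, Δ - 1`, and record for each of the `s` explored
vertices, in order, the set of labels of its edges in `E'`. The edges of `E'` at the first `i`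
explored vertices determine the next one, so by induction this code determines the exploration and
hence `E'`; and there are at most `(2 ^ Δ) ^ s` codes.
-/

open Finset

section Exploration

variable {V : Type*}

noncomputable def edgesAt (E' : Finset (Sym2 V)) (x : V) : Finset (Sym2 V) :=
  E'.filter (x ∈ ·)

@[simp]
lemma mem_edgesAt {E' : Finset (Sym2 V)} {x : V} {e : Sym2 V} :
    e ∈ edgesAt E' x ↔ e ∈ E' ∧ x ∈ e := by
  simp [edgesAt]

lemma coe_edgesAt_subset_incidenceSet {G : SimpleGraph V} {E' : Finset (Sym2 V)}
    (hG : (E' : Set (Sym2 V)) ⊆ G.edgeSet)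
    (x : V) : (edgesAt E' x : Set (Sym2 V)) ⊆ G.incidenceSet x :=
  fun _ he => ⟨hG (mem_edgesAt.1 he).1, (mem_edgesAt.1 he).2⟩

variable [Fintype V]

noncomputable def edgeVertFinset (E' : Finset (Sym2 V)) : Finset V :=
  univ.filter (· ∈ edgeVerts E')

@[simp]
lemma mem_edgeVertFinset {E' : Finset (Sym2 V)} {x : V} :
    x ∈ edgeVertFinset E' ↔ x ∈ edgeVerts E' := by
  simp [edgeVertFinset]

@[simp]
lemma coe_edgeVertFinset (E' : Finset (Sym2 V)) :
    (edgeVertFinset E' : Set V) = edgeVerts E' := by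
  ext; simp

lemma card_edgeVertFinset (E' : Finset (Sym2 V)) :
    #(edgeVertFinset E') = (edgeVerts E').ncard := by
  rw [← Set.ncard_coe_finset, coe_edgeVertFinset]

lemma eq_of_edgesAt_eq {E₁ E₂ : Finset (Sym2 V)} {A : Finset V} (h₁ : edgeVertFinset E₁ ⊆ A)
    (h₂ : edgeVertFinset E₂ ⊆ A) (h : ∀ a ∈ A, edgesAt E₁ a = edgesAt E₂ a) : E₁ = E₂ := by
  have subset : ∀ {E E' : Finset (Sym2 V)}, edgeVertFinset E ⊆ A →
      (∀ a ∈ A, edgesAt E a = edgesAt E' a) → E ⊆ E' := by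
    intro E E' hE h e he
    have ha : e.out.1 ∈ A := hE (mem_edgeVertFinset.2 ⟨e, he, Sym2.out_fst_mem e⟩)
    have : e ∈ edgesAt E' e.out.1 := h _ ha ▸ mem_edgesAt.2 ⟨he, Sym2.out_fst_mem e⟩
    exact (mem_edgesAt.1 this).1
  exact (subset h₁ h).antisymm (subset h₂ fun a ha => (h a ha).symm)

noncomputable def exitVerts (E' : Finset (Sym2 V)) (A : Finset V) : Finset V :=
  univ.filter fun x => x ∉ A ∧ ∃ y ∈ A, s(x, y) ∈ E'

@[simp]
lemma mem_exitVerts {E' : Finset (Sym2 V)} {A : Finset V} {x : V} :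
    x ∈ exitVerts E' A ↔ x ∉ A ∧ ∃ y ∈ A, s(x, y) ∈ E' := by
  simp [exitVerts]

lemma exitVerts_congr {E₁ E₂ : Finset (Sym2 V)} {A : Finset V}
    (h : ∀ a ∈ A, edgesAt E₁ a = edgesAt E₂ a) : exitVerts E₁ A = exitVerts E₂ A := by
  ext x
  have key : ∀ y ∈ A, s(x, y) ∈ E₁ ↔ s(x, y) ∈ E₂ := fun y hy => by
    simpa using congrArg (s(x, y) ∈ ·) (h y hy)
  simp only [mem_exitVerts]
  exact and_congr_right fun _ => exists_congr fun y => and_congr_right (key y)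

lemma exitVerts_nonempty {E' : Finset (Sym2 V)} (hconn : EdgeInducedConnected E')
    {A : Finset V} {a b : V} (ha : a ∈ A) (haE : a ∈ edgeVerts E') (hb : b ∉ A)
    (hbE : b ∈ edgeVerts E') :
    (exitVerts E' A).Nonempty := by
  obtain ⟨p⟩ := hconn.preconnected ⟨a, haE⟩ ⟨b, hbE⟩
  obtain ⟨d, -, hd_fst, hd_snd⟩ := p.exists_boundary_dart {w | (w : V) ∈ A} ha hb
  have hadj := d.adj
  simp only [SimpleGraph.comap_adj, SimpleGraph.fromEdgeSet_adj, Finset.mem_coe] at hadj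
  exact ⟨d.snd, mem_exitVerts.2 ⟨hd_snd, d.fst, hd_fst, Sym2.eq_swap ▸ hadj.1⟩⟩

-- Any exit vertex will do, as long as the choice depends on `exitVerts E' A` alone: this is what
-- makes the exploration local (`exploreVert_eq_of_edgesAt_eq`).
noncomputable def nextVert (E' : Finset (Sym2 V)) (v : V) (A : Finset V) : V :=
  if h : (exitVerts E' A).Nonempty then h.choose else v

lemma nextVert_mem_exitVerts {E' : Finset (Sym2 V)} {v : V} {A : Finset V}
    (h : (exitVerts E' A).Nonempty) : nextVert E' v A ∈ exitVerts E' A := by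
  rw [nextVert, dif_pos h]
  exact h.choose_spec

lemma nextVert_congr {E₁ E₂ : Finset (Sym2 V)} {v : V} {A : Finset V}
    (h : exitVerts E₁ A = exitVerts E₂ A) : nextVert E₁ v A = nextVert E₂ v A := by
  unfold nextVert
  rw [h]

noncomputable def explored (E' : Finset (Sym2 V)) (v : V) : ℕ → Finset V
  | 0 => {v}
  | n + 1 => insert (nextVert E' v (explored E' v n)) (explored E' v n)

noncomputable def exploreVert (E' : Finset (Sym2 V)) (v : V) : ℕ → V
  | 0 => v
  | n + 1 => nextVert E' v (explored E' v n)

variable {E' : Finset (Sym2 V)} {v : V}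

lemma explored_eq_image (n : ℕ) :
    explored E' v n = (range (n + 1)).image (exploreVert E' v) := by
  induction n with
  | zero => rfl
  | succ n ih => rw [range_add_one, image_insert, ← ih]; rfl

lemma exploreVert_mem_edgeVerts (hv : v ∈ edgeVerts E') (n : ℕ) :
    exploreVert E' v n ∈ edgeVerts E' := by
  cases n with
  | zero => exact hv
  | succ n =>
    by_cases h : (exitVerts E' (explored E' v n)).Nonempty
    · obtain ⟨-, y, -, hxy⟩ := mem_exitVerts.1 (nextVert_mem_exitVerts (v := v) h)
      exact ⟨_, hxy, Sym2.mem_mk_left _ _⟩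
    · simpa [exploreVert, nextVert, h] using hv

lemma explored_subset_edgeVertFinset (hv : v ∈ edgeVerts E') (n : ℕ) :
    explored E' v n ⊆ edgeVertFinset E' := by
  rw [explored_eq_image, image_subset_iff]
  exact fun i _ => mem_edgeVertFinset.2 (exploreVert_mem_edgeVerts hv i)

-- By connectedness, the exploration adds a new vertex at every step until all are reached.
lemma min_le_card_explored (hv : v ∈ edgeVerts E') (hconn : EdgeInducedConnected E') (n : ℕ) :
    min (n + 1) #(edgeVertFinset E') ≤ #(explored E' v n) := by
  induction n with
  | zero => simp [explored]
  | succ n ih =>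
    have hsub := explored_subset_edgeVertFinset hv n
    by_cases hall : explored E' v n = edgeVertFinset E'
    · have : #(explored E' v n) ≤ #(explored E' v (n + 1)) := card_le_card (subset_insert _ _)
      rw [hall] at this
      exact (min_le_right _ _).trans this
    · obtain ⟨b, hbE, hb⟩ := exists_of_ssubset (hsub.ssubset_of_ne hall)
      have hv' : v ∈ explored E' v n := by
        rw [explored_eq_image]; exact mem_image_of_mem _ (mem_range.2 n.succ_pos)
      have hne := exitVerts_nonempty hconn hv' hv hb (mem_edgeVertFinset.1 hbE)
      have hnew := (mem_exitVerts.1 (nextVert_mem_exitVerts (v := v) hne)).1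
      rw [explored, card_insert_of_notMem hnew]
      omega

lemma explored_eq_edgeVertFinset (hv : v ∈ edgeVerts E') (hconn : EdgeInducedConnected E') :
    explored E' v (#(edgeVertFinset E') - 1) = edgeVertFinset E' := by
  have hpos : 0 < #(edgeVertFinset E') := card_pos.2 ⟨v, mem_edgeVertFinset.2 hv⟩
  refine eq_of_subset_of_card_le (explored_subset_edgeVertFinset hv _) ?_
  have := min_le_card_explored hv hconn (#(edgeVertFinset E') - 1)
  omega

lemma explored_congr {E₁ E₂ : Finset (Sym2 V)} {n : ℕ}
    (h : ∀ j ≤ n, exploreVert E₁ v j = exploreVert E₂ v j) :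
    explored E₁ v n = explored E₂ v n := by
  rw [explored_eq_image, explored_eq_image]
  exact image_congr fun j hj => h j (Nat.lt_succ_iff.1 (mem_range.1 hj))

lemma exploreVert_eq_of_edgesAt_eq {E₁ E₂ : Finset (Sym2 V)} {n : ℕ}
    (h : ∀ j < n, exploreVert E₁ v j = exploreVert E₂ v j →
      edgesAt E₁ (exploreVert E₁ v j) = edgesAt E₂ (exploreVert E₁ v j)) :
    ∀ j ≤ n, exploreVert E₁ v j = exploreVert E₂ v j := by
  induction n with
  | zero => intro j hj; obtain rfl := Nat.le_zero.1 hj; rfl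
  | succ n ih =>
    have hle := ih fun j hj => h j (by omega)
    intro j hj
    rcases Nat.lt_or_ge j (n + 1) with hj' | hj'
    · exact hle j (by omega)
    obtain rfl : j = n + 1 := by omega
    have hedges : ∀ a ∈ explored E₁ v n, edgesAt E₁ a = edgesAt E₂ a := by
      rw [explored_eq_image]
      intro a ha
      obtain ⟨i, hi, rfl⟩ := mem_image.1 ha
      have hi : i ≤ n := Nat.lt_succ_iff.1 (mem_range.1 hi)
      exact h i (by omega) (hle i hi)
    change nextVert E₁ v (explored E₁ v n) = nextVert E₂ v (explored E₂ v n)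
    rw [← explored_congr hle]
    exact nextVert_congr (exitVerts_congr hedges)

end Exploration

section Coding

variable {V : Type*} [Fintype V] {G : SimpleGraph V}

lemma SimpleGraph.exists_incidenceSet_injOn_range {Δ : ℕ}
    (hΔ : ∀ x, (G.neighborSet x).ncard ≤ Δ) (u : V) :
    ∃ f : Sym2 V → ℕ, G.incidenceSet u ⊆ f ⁻¹' range Δ ∧ (G.incidenceSet u).InjOn f := by
  refine (Set.toFinite _).exists_injOn_of_encard_le ?_
  rw [← (Set.toFinite _).cast_ncard_eq, Set.ncard_congr' (G.incidenceSetEquivNeighborSet u),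
    Set.encard_coe_eq_coe_finsetCard, card_range]
  exact_mod_cast hΔ u

noncomputable def explorationCode (L : V → Sym2 V → ℕ) (E' : Finset (Sym2 V)) (v : V)
    (s : ℕ) : Fin s → Finset ℕ :=
  fun i => (edgesAt E' (exploreVert E' v i)).image (L (exploreVert E' v i))

lemma explorationCode_mem_piFinset {L : V → Sym2 V → ℕ} {Δ : ℕ}
    (hL : ∀ u, G.incidenceSet u ⊆ L u ⁻¹' range Δ) {E' : Finset (Sym2 V)}
    (hG : (E' : Set (Sym2 V)) ⊆ G.edgeSet) (v : V) (s : ℕ) :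
    explorationCode L E' v s ∈ Fintype.piFinset fun _ => (range Δ).powerset := by
  simp only [Fintype.mem_piFinset, mem_powerset, explorationCode, image_subset_iff]
  exact fun i e he => hL _ (coe_edgesAt_subset_incidenceSet hG _ he)

lemma eq_of_explorationCode_eq {L : V → Sym2 V → ℕ} (hL : ∀ u, (G.incidenceSet u).InjOn (L u))
    {E₁ E₂ : Finset (Sym2 V)} {v : V} {s : ℕ}
    (hG₁ : (E₁ : Set (Sym2 V)) ⊆ G.edgeSet) (hG₂ : (E₂ : Set (Sym2 V)) ⊆ G.edgeSet)
    (hv₁ : v ∈ edgeVerts E₁) (hv₂ : v ∈ edgeVerts E₂)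
    (hs₁ : (edgeVerts E₁).ncard = s) (hs₂ : (edgeVerts E₂).ncard = s)
    (hconn₁ : EdgeInducedConnected E₁) (hconn₂ : EdgeInducedConnected E₂)
    (h : explorationCode L E₁ v s = explorationCode L E₂ v s) : E₁ = E₂ := by
  rw [← card_edgeVertFinset] at hs₁ hs₂
  have hpos : 0 < s := hs₁ ▸ card_pos.2 ⟨v, mem_edgeVertFinset.2 hv₁⟩
  have hedges : ∀ j < s, exploreVert E₁ v j = exploreVert E₂ v j →
      edgesAt E₁ (exploreVert E₁ v j) = edgesAt E₂ (exploreVert E₁ v j) := by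
    intro j hj heq
    have hcode := congrFun h ⟨j, hj⟩
    simp only [explorationCode, ← heq] at hcode
    exact coe_injective <| ((hL _).image_eq_image_iff (coe_edgesAt_subset_incidenceSet hG₁ _)
      (coe_edgesAt_subset_incidenceSet hG₂ _)).1 (by exact_mod_cast hcode)
  have hverts := exploreVert_eq_of_edgesAt_eq (n := s - 1) fun j hj => hedges j (by omega)
  have hexp₁ := explored_eq_edgeVertFinset hv₁ hconn₁
  have hexp₂ := explored_eq_edgeVertFinset hv₂ hconn₂
  rw [hs₁] at hexp₁
  rw [hs₂, ← explored_congr hverts] at hexp₂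
  refine eq_of_edgesAt_eq hexp₁.ge hexp₂.ge ?_
  rw [explored_eq_image]
  intro a ha
  obtain ⟨i, hi, rfl⟩ := mem_image.1 ha
  have hi : i < s := by have := mem_range.1 hi; omega
  exact hedges i hi (hverts i (by omega))

end Coding

theorem stmt6_general {V : Type*} [Fintype V] (G : SimpleGraph V) (Δ : ℕ)
    (hΔ : ∀ x : V, (G.neighborSet x).ncard ≤ Δ) (v : V) (s : ℕ) :
    Set.ncard {E' : Finset (Sym2 V) | (E' : Set (Sym2 V)) ⊆ G.edgeSet ∧ E'.Nonempty ∧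
        v ∈ edgeVerts E' ∧ (edgeVerts E').ncard = s ∧ EdgeInducedConnected E'} ≤
      2 ^ (s * Δ) := by
  choose L hL_range hL_inj using G.exists_incidenceSet_injOn_range hΔ
  let codes := Fintype.piFinset fun _ : Fin s => (range Δ).powerset
  calc _ ≤ (codes : Set (Fin s → Finset ℕ)).ncard := by
        refine Set.ncard_le_ncard_of_injOn (explorationCode L · v s) ?_ ?_ (finite_toSet _)
        · exact fun E hE => explorationCode_mem_piFinset hL_range hE.1 v s
        · rintro E₁ ⟨hG₁, -, hv₁, hs₁, hconn₁⟩ E₂ ⟨hG₂, -, hv₂, hs₂, hconn₂⟩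
          exact eq_of_explorationCode_eq hL_inj hG₁ hG₂ hv₁ hv₂ hs₁ hs₂ hconn₁ hconn₂
    _ = 2 ^ (s * Δ) := by
      rw [Set.ncard_coe_finset, Fintype.card_piFinset_const, card_powerset, card_range,
        ← pow_mul, mul_comm]

/-- In a finite graph `G` of maximum degree `Δ`, for every vertex `v` and
every `s ≥ 1`, the number of connected edge-induced subgraphs of `G` containing `v` and
having exactly `s` vertices is at most `2^(s·Δ)`. -/
theorem stmt6 {V : Type*} [Fintype V] [DecidableEq V] (G : SimpleGraph V) (Δ : ℕ)
    (hΔ : ∀ x : V, (G.neighborSet x).ncard ≤ Δ) (v : V) (s : ℕ) (hs : 1 ≤ s) :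
    Set.ncard {E' : Finset (Sym2 V) | (E' : Set (Sym2 V)) ⊆ G.edgeSet ∧ E'.Nonempty ∧
        v ∈ edgeVerts E' ∧ (edgeVerts E').ncard = s ∧ EdgeInducedConnected E'} ≤
      2 ^ (s * Δ) :=
  stmt6_general G Δ hΔ v s
end

section
/- Let G be a finite graph in which every vertex has even degree, and let W be a trail in G (a walk that traverses no edge more than once) starting at a vertex v. Suppose W is maximal in the sense that every edge of G incident with the final vertex of W is traversed by W. Then the final vertex of W equals v, i.e., every maximal trail in an even-degree graph returns to its starting vertex. -/
/-!
Count the edges of the trail at its final vertex `w`. Along a trail from `v ≠ w`, the endpoint `w`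
meets an odd number of edges, since each pass through `w` uses two of them and the last step uses
one. A maximal trail traverses every edge at `w` exactly once, so that number is the degree of
`w`, which is even.
-/

namespace SimpleGraph.Walk

variable {V : Type*} {G : SimpleGraph V}

theorem IsTrail.countP_mem_edges_eq_degree [DecidableEq V] {u v : V} {p : G.Walk u v}
    (ht : p.IsTrail) {x : V} [Fintype (G.neighborSet x)]
    (hcover : ∀ y, G.Adj x y → s(x, y) ∈ p.edges) :
    p.edges.countP (fun e => x ∈ e) = G.degree x := by
  have hfilter : ht.edgesFinset.filter (x ∈ ·) = G.incidenceFinset x := by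
    ext e
    induction e with
    | h a b =>
      simp only [Finset.mem_filter, mem_incidenceFinset, incidenceSet, Set.mem_ofPred_eq]
      constructor
      · exact fun ⟨he, hxe⟩ => ⟨p.edges_subset_edgeSet he, hxe⟩
      · rintro ⟨hab, hxe⟩
        refine ⟨?_, hxe⟩
        rcases Sym2.mem_iff.1 hxe with rfl | rfl
        · exact hcover b hab
        · exact Sym2.eq_swap ▸ hcover a hab.symm
  rw [← card_incidenceFinset_eq_degree, ← hfilter, List.countP_eq_length_filter]
  rfl

end SimpleGraph.Walk

/-- In a finite graph in which every vertex has even degree, every maximal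
trail returns to its starting vertex: if `W` is a trail from `v` to `w` and every edge of `G`
incident with `w` is traversed by `W`, then `w = v`. -/
theorem stmt9 {V : Type*} [Fintype V] (G : SimpleGraph V) [DecidableRel G.Adj]
    (heven : ∀ x : V, Even (G.degree x)) {v w : V} (W : G.Walk v w)
    (htrail : W.IsTrail) (hmax : ∀ x : V, G.Adj w x → s(w, x) ∈ W.edges) :
    w = v := by
  classical
  by_contra hne
  have hodd := mt (htrail.even_countP_edges_iff w).1 (fun h => (h (Ne.symm hne)).2 rfl)
  exact hodd (htrail.countP_mem_edges_eq_degree hmax ▸ heven w)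
end

section
/- Let G be a finite graph in which every vertex has even degree, let v be a vertex of G of degree at least 4, and let s ≥ 1. Suppose that every set U of at most s vertices of G induces at most |U| edges. Then every nonempty subgraph of G in which every vertex has even degree and which contains all edges of G incident with v has more than s vertices; in particular, v is (s+1)-good. -/
open scoped Classical

/-!
Pass to the spanning graph `K` of the even subgraph `H`. Every non-isolated vertex of `K` has
even, hence at least `2`, degree and `v` keeps all of its at least `4` edges, so the degree-sum
formula gives `K` more edges than non-isolated vertices. These vertices lie in `H`, so if there
were at most `s` of them they would induce in `G` at most as many edges as there are vertices,
yet they induce every edge of `K`.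
-/

open Finset

namespace SimpleGraph

variable {V : Type*}

theorem card_support_lt_card_edgeFinset_of_even_degree [Fintype V] (K : SimpleGraph V)
    [DecidableRel K.Adj] (heven : ∀ x, Even (K.degree x)) {v : V} (hv : 4 ≤ K.degree v) :
    #K.support.toFinset < #K.edgeFinset := by
  have hvS : v ∈ K.support.toFinset := by
    rw [Set.mem_toFinset, ← K.degree_pos_iff_mem_support]
    omega
  have htwo : ∀ x ∈ K.support.toFinset.erase v, 2 ≤ K.degree x := by
    intro x hx
    have hpos : 0 < K.degree x :=
      (K.degree_pos_iff_mem_support x).2 (Set.mem_toFinset.1 (mem_of_mem_erase hx))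
    obtain ⟨k, hk⟩ := heven x
    omega
  have hsum := card_nsmul_le_sum _ _ 2 htwo
  rw [smul_eq_mul] at hsum
  have hdegsum := K.sum_degrees_support_eq_twice_card_edges
  rw [← add_sum_erase _ _ hvS] at hdegsum
  have hcard := card_erase_add_one hvS
  omega

theorem edgeSet_subset_induced_of_support_subset {G K : SimpleGraph V} (hK : K ≤ G)
    {U : Set V} (hU : K.support ⊆ U) :
    K.edgeSet ⊆ {e : Sym2 V | e ∈ G.edgeSet ∧ ∀ x ∈ e, x ∈ U} := by
  intro e he
  induction e with
  | h x y =>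
    refine ⟨edgeSet_mono hK he, fun z hz => hU ?_⟩
    rcases Sym2.mem_iff.1 hz with rfl | rfl
    · exact ⟨y, he⟩
    · exact ⟨x, he.symm⟩

namespace Subgraph

variable {G : SimpleGraph V}

theorem degree_spanningCoe_eq_ncard_neighborSet [Fintype V] (H : G.Subgraph)
    [DecidableRel H.spanningCoe.Adj] (x : V) :
    H.spanningCoe.degree x = (H.neighborSet x).ncard := by
  rw [← card_neighborSet_eq_degree, ← Nat.card_eq_fintype_card, Nat.card_coe_set_eq]
  rfl

theorem neighborSet_eq_of_incidenceSet_subset (H : G.Subgraph) {v : V}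
    (hinc : G.incidenceSet v ⊆ H.edgeSet) : H.neighborSet v = G.neighborSet v :=
  (H.neighborSet_subset v).antisymm fun _ hw => hinc ⟨hw, Sym2.mem_mk_left _ _⟩

end Subgraph

end SimpleGraph

open SimpleGraph

theorem stmt13_general {V : Type*} [Fintype V] (G : SimpleGraph V)
    [DecidableRel G.Adj]
    (v : V) (hv : 4 ≤ G.degree v)
    (s : ℕ)
    (hind : ∀ U : Finset V, U.card ≤ s →
      Set.ncard {e : Sym2 V | e ∈ G.edgeSet ∧ ∀ x ∈ e, x ∈ U} ≤ U.card) :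
    ∀ H : G.Subgraph, H.verts.Nonempty →
      (∀ e ∈ G.edgeSet, v ∈ e → e ∈ H.edgeSet) →
      (∀ x : V, Even ((H.neighborSet x).ncard)) →
      s < H.verts.ncard := by
  intro H _ hall hevenH
  by_contra! hsmall
  set K := H.spanningCoe
  have hdeg := H.degree_spanningCoe_eq_ncard_neighborSet
  have hKv : K.degree v = G.degree v := by
    rw [hdeg, H.neighborSet_eq_of_incidenceSet_subset fun e he => hall e he.1 he.2,
      ← Nat.card_coe_set_eq, Nat.card_eq_fintype_card, card_neighborSet_eq_degree]
  have hmany := K.card_support_lt_card_edgeFinset_of_even_degree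
    (fun x => hdeg x ▸ hevenH x) (hKv ▸ hv)
  have hsupport : #K.support.toFinset ≤ s := by
    rw [← Set.ncard_eq_toFinset_card']
    exact (Set.ncard_le_ncard H.support_subset_verts).trans hsmall
  have hfew : #K.edgeFinset ≤ #K.support.toFinset :=
    calc #K.edgeFinset = K.edgeSet.ncard := (Set.ncard_eq_toFinset_card' _).symm
      _ ≤ _ := Set.ncard_le_ncard (edgeSet_subset_induced_of_support_subset H.spanningCoe_le
          (Set.coe_toFinset K.support).ge)
      _ ≤ _ := hind _ hsupport
  omega

/-- Let `G` be a finite graph in which every vertex has even degree, let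
`v` be a vertex of degree at least `4`, and suppose every set `U` of at most `s` vertices
induces at most `|U|` edges. Then every nonempty subgraph of `G` in which every vertex has
even degree and which contains all edges of `G` incident with `v` has more than `s`
vertices; in particular `v` is `(s+1)`-good. -/
theorem stmt13 {V : Type*} [Fintype V] [DecidableEq V] (G : SimpleGraph V)
    [DecidableRel G.Adj]
    (heven : ∀ x : V, Even (G.degree x)) (v : V) (hv : 4 ≤ G.degree v)
    (s : ℕ) (hs : 1 ≤ s)
    (hind : ∀ U : Finset V, U.card ≤ s →
      Set.ncard {e : Sym2 V | e ∈ G.edgeSet ∧ ∀ x ∈ e, x ∈ U} ≤ U.card) :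
    ∀ H : G.Subgraph, H.verts.Nonempty →
      (∀ e ∈ G.edgeSet, v ∈ e → e ∈ H.edgeSet) →
      (∀ x : V, Even ((H.neighborSet x).ncard)) →
      s < H.verts.ncard :=
  stmt13_general G v hv s hind
end
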